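/- Lawvere's Fixed-Point Theorem: in a Cartesian closed category, if there exists a point-surjective morphism φ : X → Y^X (i.e., for every g : X → Y there is a point x : 1 → X with ev ∘ (φ∘x, id) representing g), then every endomorphism f : Y → Y has a fixed point, i.e., there exists y : 1 → Y with f ∘ y = y. -/

import Mathlib

/-!
Diagonal argument: with `e : X ⊗ X ⟶ Y` the uncurried `φ`, the map `g := Δ ≫ e ≫ f` is represented
by some point `x`, and evaluating `g = e(-, x)` at `x` shows that `y := x ≫ Δ ≫ e` satisfies
`y ≫ f = y`. Exponentials are only needed to uncurry `φ`.
-/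

open CategoryTheory MonoidalCategory CartesianClosed

namespace CategoryTheory.CartesianMonoidalCategory

variable {C : Type*} [Category C] [CartesianMonoidalCategory C]

lemma comp_lift_toUnit_comp_self {X Z : C} (x : 𝟙_ C ⟶ X) (a : X ⟶ Z) :
    x ≫ lift a (toUnit X ≫ x) = x ≫ lift a (𝟙 X) := by
  rw [comp_lift, comp_lift, ← Category.assoc, toUnit_unique (x ≫ toUnit X) (𝟙 _),
    Category.id_comp, Category.comp_id]

theorem exists_fixed_point_of_pointSurjective {X Y : C} (e : X ⊗ X ⟶ Y)
    (hsurj : ∀ g : X ⟶ Y, ∃ x : 𝟙_ C ⟶ X, g = lift (𝟙 X) (toUnit X ≫ x) ≫ e)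
    (f : Y ⟶ Y) : ∃ y : 𝟙_ C ⟶ Y, y ≫ f = y := by
  obtain ⟨x, hx⟩ := hsurj (lift (𝟙 X) (𝟙 X) ≫ e ≫ f)
  refine ⟨x ≫ lift (𝟙 X) (𝟙 X) ≫ e, ?_⟩
  calc (x ≫ lift (𝟙 X) (𝟙 X) ≫ e) ≫ f
      = x ≫ lift (𝟙 X) (toUnit X ≫ x) ≫ e := by simp only [Category.assoc, ← hx]
    _ = x ≫ lift (𝟙 X) (𝟙 X) ≫ e := by
      rw [← Category.assoc, comp_lift_toUnit_comp_self, Category.assoc]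

end CategoryTheory.CartesianMonoidalCategory

/-- Lawvere's Fixed-Point Theorem: in a cartesian closed category, if `φ : X ⟶ Y^X` is
point-surjective (every `g : X ⟶ Y` is represented, via evaluation, by some point
`x : 1 ⟶ X`), then every endomorphism `f : Y ⟶ Y` has a fixed point `y : 1 ⟶ Y`. -/
theorem lawvere_fixed_point {C : Type*} [Category C] [CartesianMonoidalCategory C]
    [MonoidalClosed C] {X Y : C} (φ : X ⟶ (X ⟹ Y))
    (hsurj : ∀ g : X ⟶ Y, ∃ x : 𝟙_ C ⟶ X,
      g = CartesianMonoidalCategory.lift (𝟙 X) (CartesianMonoidalCategory.toUnit X ≫ x ≫ φ) ≫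
        (ihom.ev X).app Y)
    (f : Y ⟶ Y) : ∃ y : 𝟙_ C ⟶ Y, y ≫ f = y := by
  refine CartesianMonoidalCategory.exists_fixed_point_of_pointSurjective
    (X ◁ φ ≫ (ihom.ev X).app Y) (fun g => ?_) f
  obtain ⟨x, hx⟩ := hsurj g
  exact ⟨x, by rw [hx, CartesianMonoidalCategory.lift_whiskerLeft_assoc, Category.assoc]⟩
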